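/- arXiv:2406.20063 — 4 statements merged into one kernel-verified Lean document; each statement's English description precedes it below -/
import Mathlib

section
/- Let $r\ge0$, $\mu,\sigma,\rho,\delta>0$, let $\lambda<0$ be the negative root of $\frac{\mu^2}{2\sigma^2}x^2-(\frac{\mu^2}{2\sigma^2}+r+\rho-\delta)x-\delta=0$, and let $y_0>0$, $\phi_0>0$, and $K\in\mathbb{R}$ be constants. Then the function $u(y):=\frac{y_0-\phi_0}{\rho\lambda}\big(\frac{y}{y_0}\big)^{\lambda}+\frac{K}{\delta}$, $y>0$, satisfies the linear ODE $\frac{\mu^2}{2\sigma^2}y^2u''(y)+(\delta-r-\rho)\,y\,u'(y)-\delta u(y)+K=0$ for all $y>0$, together with the boundary conditions $y_0-\rho y_0 u'(y_0)=\phi_0$ and $\lim_{y\to+\infty}u'(y)=\lim_{y\to+\infty}y\,u''(y)=0$. -/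
open Filter Set Topology

/-! Writing `t = (y / y₀) ^ λ`, both `y u'` and `y² u''` are multiples of `t`
(namely `A λ t` and `A λ (λ - 1) t`), so the Euler operator applied to `u` equals `A t` times
the characteristic polynomial at `λ`, which vanishes. Since `λ < 0`, `u'` and `y u''` are
multiples of `(y / y₀) ^ (λ - 1)` and decay at infinity. -/

section ScaledPower

variable {y₀ : ℝ}

lemma hasDerivAt_const_mul_div_rpow (A p : ℝ) {y : ℝ} (hy : 0 < y / y₀) :
    HasDerivAt (fun z => A * (z / y₀) ^ p) (A * p / y₀ * (y / y₀) ^ (p - 1)) y := by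
  refine ((((hasDerivAt_id y).div_const y₀).rpow_const (p := p) (Or.inl hy.ne')).const_mul
    A).congr_deriv ?_
  simp only [id]
  ring

lemma deriv_eq_of_eq_const_mul_div_rpow_add (hy₀ : 0 < y₀) {u : ℝ → ℝ} {A p B : ℝ}
    (hu : ∀ y, 0 < y → u y = A * (y / y₀) ^ p + B) {y : ℝ} (hy : 0 < y) :
    deriv u y = A * p / y₀ * (y / y₀) ^ (p - 1) := by
  have heq : u =ᶠ[𝓝 y] fun z => A * (z / y₀) ^ p + B := eventually_of_mem (Ioi_mem_nhds hy) hu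
  exact (((hasDerivAt_const_mul_div_rpow A p (div_pos hy hy₀)).add_const B).congr_of_eventuallyEq
    heq).deriv

lemma mul_div_mul_div_rpow_sub_one (hy₀ : 0 < y₀) (c p : ℝ) {y : ℝ} (hy : 0 < y) :
    y * (c / y₀ * (y / y₀) ^ (p - 1)) = c * (y / y₀) ^ p := by
  rw [Real.rpow_sub_one (div_pos hy hy₀).ne']
  field_simp

lemma tendsto_const_mul_div_rpow_atTop (hy₀ : 0 < y₀) (c : ℝ) {q : ℝ} (hq : q < 0) :
    Tendsto (fun y => c * (y / y₀) ^ q) atTop (𝓝 0) := by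
  have := (tendsto_rpow_neg_atTop (neg_pos.2 hq)).comp (tendsto_id.atTop_div_const hy₀)
  simpa using this.const_mul c

end ScaledPower

theorem euler_ode_solution_general (r μ σ ρ δ y₀ φ₀ K lam : ℝ)
    (hρ : 0 < ρ) (hδ : 0 < δ)
    (hy₀ : 0 < y₀) (hlam : lam < 0)
    (hroot : μ ^ 2 / (2 * σ ^ 2) * lam ^ 2 - (μ ^ 2 / (2 * σ ^ 2) + r + ρ - δ) * lam - δ = 0)
    (u : ℝ → ℝ) (hu : ∀ y, 0 < y → u y = (y₀ - φ₀) / (ρ * lam) * (y / y₀) ^ lam + K / δ) :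
    (∀ y, 0 < y →
      μ ^ 2 / (2 * σ ^ 2) * y ^ 2 * deriv (deriv u) y + (δ - r - ρ) * y * deriv u y
        - δ * u y + K = 0) ∧
    y₀ - ρ * y₀ * deriv u y₀ = φ₀ ∧
    Filter.Tendsto (deriv u) Filter.atTop (nhds 0) ∧
    Filter.Tendsto (fun y => y * deriv (deriv u) y) Filter.atTop (nhds 0) := by
  set A := (y₀ - φ₀) / (ρ * lam)
  have hd1 (y : ℝ) (hy : 0 < y) : deriv u y = A * lam / y₀ * (y / y₀) ^ (lam - 1) :=
    deriv_eq_of_eq_const_mul_div_rpow_add hy₀ hu hy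
  have hyd2 (y : ℝ) (hy : 0 < y) :
      y * deriv (deriv u) y = A * lam * (lam - 1) / y₀ * (y / y₀) ^ (lam - 1) := by
    have hu' (z : ℝ) (hz : 0 < z) : deriv u z = A * lam / y₀ * (z / y₀) ^ (lam - 1) + 0 := by
      rw [hd1 z hz, add_zero]
    rw [deriv_eq_of_eq_const_mul_div_rpow_add hy₀ hu' hy, mul_div_mul_div_rpow_sub_one hy₀ _ _ hy]
    ring
  refine ⟨fun y hy => ?_, ?_, ?_, ?_⟩
  · have hy_deriv := mul_div_mul_div_rpow_sub_one hy₀ (A * lam) lam hy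
    have hy2_deriv2 := mul_div_mul_div_rpow_sub_one hy₀ (A * lam * (lam - 1)) lam hy
    rw [← hd1 y hy] at hy_deriv
    rw [← hyd2 y hy] at hy2_deriv2
    rw [hu y hy]
    have hK : δ * (K / δ) = K := mul_div_cancel₀ K hδ.ne'
    linear_combination (A * (y / y₀) ^ lam) * hroot + μ ^ 2 / (2 * σ ^ 2) * hy2_deriv2
      + (δ - r - ρ) * hy_deriv - hK
  · rw [hd1 y₀ hy₀, div_self hy₀.ne', Real.one_rpow]
    simp only [A]
    field_simp [hρ.ne', hlam.ne]
    ring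
  · refine (tendsto_const_mul_div_rpow_atTop hy₀ (A * lam / y₀) (q := lam - 1)
      (by linarith)).congr' ?_
    filter_upwards [eventually_gt_atTop 0] with y hy using (hd1 y hy).symm
  · refine (tendsto_const_mul_div_rpow_atTop hy₀ (A * lam * (lam - 1) / y₀) (q := lam - 1)
      (by linarith)).congr' ?_
    filter_upwards [eventually_gt_atTop 0] with y hy using (hyd2 y hy).symm

/-- the function `u(y) = (y₀-φ₀)/(ρλ) (y/y₀)^λ + K/δ` solves the linear Euler ODE
`μ²/(2σ²) y² u'' + (δ-r-ρ) y u' - δ u + K = 0` on `(0,∞)`, with the boundary conditions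
`y₀ - ρ y₀ u'(y₀) = φ₀` and `u'(y) → 0`, `y u''(y) → 0` as `y → +∞`. -/
theorem euler_ode_solution (r μ σ ρ δ y₀ φ₀ K lam : ℝ)
    (hr : 0 ≤ r) (hμ : 0 < μ) (hσ : 0 < σ) (hρ : 0 < ρ) (hδ : 0 < δ)
    (hy₀ : 0 < y₀) (hφ₀ : 0 < φ₀) (hlam : lam < 0)
    (hroot : μ ^ 2 / (2 * σ ^ 2) * lam ^ 2 - (μ ^ 2 / (2 * σ ^ 2) + r + ρ - δ) * lam - δ = 0)
    (u : ℝ → ℝ) (hu : ∀ y, 0 < y → u y = (y₀ - φ₀) / (ρ * lam) * (y / y₀) ^ lam + K / δ) :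
    (∀ y, 0 < y →
      μ ^ 2 / (2 * σ ^ 2) * y ^ 2 * deriv (deriv u) y + (δ - r - ρ) * y * deriv u y
        - δ * u y + K = 0) ∧
    y₀ - ρ * y₀ * deriv u y₀ = φ₀ ∧
    Filter.Tendsto (deriv u) Filter.atTop (nhds 0) ∧
    Filter.Tendsto (fun y => y * deriv (deriv u) y) Filter.atTop (nhds 0) :=
  euler_ode_solution_general r μ σ ρ δ y₀ φ₀ K lam hρ hδ hy₀ hlam hroot u hu
end

section
/- Suppose $y_0>0$ and $\varphi:(0,y_0]\to(0,\infty)$, $\psi:(0,y_0]\to[0,1]$ are $C^1$ functions satisfying the system $\varphi'(y)=\frac{\varphi(y)(1-\psi(y))}{y}$ and $\psi'(y)=-\frac{2\rho\sigma^2}{\mu^2}\Big[\frac{1-\psi(y)}{y}\Big(\frac{\mu^2}{2\rho\sigma^2}\psi(y)-(U_+')^{-1}(\varphi(y))+\frac{r-\delta}{\rho}+1-\alpha\Big)-\frac{r+\rho}{\rho\,\varphi(y)}+\frac{\delta}{\rho y}\Big]$ on $(0,y_0]$. If $\lim_{y\to0^+}\varphi(y)=0$, then $\lim_{y\to0^+}\psi(y)$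 exists and equals $1$. -/
open Filter Set Topology

/-- The class `𝒰` of utility functions. -/
structure UtilityClass (f f' f'' : ℝ → ℝ) : Prop where
  hasDeriv : ∀ x > 0, HasDerivAt f (f' x) x
  hasDeriv2 : ∀ x > 0, HasDerivAt f' (f'' x) x
  deriv_pos : ∀ x > 0, 0 < f' x
  deriv2_neg : ∀ x > 0, f'' x < 0
  deriv2_cont : ContinuousOn f'' (Set.Ioi 0)
  tendsto_deriv : Filter.Tendsto f' Filter.atTop (nhds 0)
  map_zero : f 0 = 0

set_option maxHeartbeats 1000000 in
/-- for a solution `(φ, ψ)` of the coupled system on `(0, y₀]`, if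
`φ(y) → 0` as `y → 0⁺`, then `ψ(y) → 1` as `y → 0⁺`. -/
theorem psi_limit_one (r μ σ ρ δ α : ℝ)
    (hr : 0 ≤ r) (hμ : 0 < μ) (hσ : 0 < σ) (hρ : 0 < ρ) (hδ : 0 < δ)
    (hα0 : 0 < α) (hα1 : α ≤ 1)
    (Up Up' Up'' : ℝ → ℝ) (hUp : UtilityClass Up Up' Up'')
    (Iplus : ℝ → ℝ) (hI : Set.InvOn Iplus Up' (Set.Ioi 0) (Up' '' Set.Ioi 0))
    (hIlim : Filter.Tendsto Iplus (nhdsWithin 0 (Set.Ioi 0)) Filter.atTop)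
    (y₀ : ℝ) (hy₀ : 0 < y₀) (φ ψ : ℝ → ℝ)
    (hφpos : ∀ y ∈ Set.Ioc 0 y₀, 0 < φ y)
    (hψmem : ∀ y ∈ Set.Ioc 0 y₀, 0 ≤ ψ y ∧ ψ y ≤ 1)
    (hφode : ∀ y ∈ Set.Ioc 0 y₀, HasDerivAt φ (φ y * (1 - ψ y) / y) y)
    (hψode : ∀ y ∈ Set.Ioc 0 y₀, HasDerivAt ψ
      (-(2 * ρ * σ ^ 2 / μ ^ 2) *
        ((1 - ψ y) / y *
            (μ ^ 2 / (2 * ρ * σ ^ 2) * ψ y - Iplus (φ y) + (r - δ) / ρ + 1 - α)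
          - (r + ρ) / (ρ * φ y) + δ / (ρ * y))) y)
    (hφ0 : Filter.Tendsto φ (nhdsWithin 0 (Set.Ioi 0)) (nhds 0)) :
    Filter.Tendsto ψ (nhdsWithin 0 (Set.Ioi 0)) (nhds 1) := by
  set D : ℝ → ℝ := fun y => -(2 * ρ * σ ^ 2 / μ ^ 2) *
        ((1 - ψ y) / y *
            (μ ^ 2 / (2 * ρ * σ ^ 2) * ψ y - Iplus (φ y) + (r - δ) / ρ + 1 - α)
          - (r + ρ) / (ρ * φ y) + δ / (ρ * y)) with hD
  set C : ℝ := 2 * ρ * σ ^ 2 / μ ^ 2 with hCdef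
  have hC : 0 < C := by positivity
  set A : ℝ := μ ^ 2 / (2 * ρ * σ ^ 2) with hAdef
  have hA : 0 < A := by positivity
  set B : ℝ := (r - δ) / ρ + 1 - α with hBdef
  have hDode : ∀ y ∈ Ioc 0 y₀, HasDerivAt ψ (D y) y := hψode
  clear_value D C A B
  have hIooy₀ : Ioo (0:ℝ) y₀ ∈ 𝓝[>] (0:ℝ) :=
    Ioo_mem_nhdsGT_of_mem ⟨le_refl 0, hy₀⟩
  have hevIoc : ∀ᶠ y in 𝓝[>] (0:ℝ), y ∈ Ioc 0 y₀ :=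
    Filter.mem_of_superset hIooy₀ fun y hy => ⟨hy.1, hy.2.le⟩
  have hφ' : Tendsto φ (𝓝[>] (0:ℝ)) (𝓝[>] (0:ℝ)) := by
    rw [tendsto_nhdsWithin_iff]
    exact ⟨hφ0, hevIoc.mono fun y hy => hφpos y hy⟩
  have hIφ : Tendsto (fun y => Iplus (φ y)) (𝓝[>] (0:ℝ)) atTop := hIlim.comp hφ'
  rw [tendsto_order]
  constructor
  · -- main part: for a < 1, eventually a < ψ y
    intro a ha
    set ε : ℝ := 1 - a with hεdef
    have hε : 0 < ε := by simp only [hεdef]; linarith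
    set M : ℝ := A + |B| + (1 + C * δ / ρ) / (C * ε) with hMdef
    clear_value ε M
    have hev : ∀ᶠ y in 𝓝[>] (0:ℝ), M ≤ Iplus (φ y) ∧ y ∈ Ioc 0 y₀ :=
      (hIφ.eventually_ge_atTop M).and hevIoc
    obtain ⟨y₁, hy₁, hsub⟩ := mem_nhdsGT_iff_exists_Ioo_subset.mp hev
    rw [Set.mem_Ioi] at hy₁
    -- derivative lower bound on the region where ψ ≤ a
    have hDge : ∀ y ∈ Ioo (0:ℝ) y₁, ψ y ≤ a → 1 / y ≤ D y := by
      intro y hy hψa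
      obtain ⟨hIM, hyIoc⟩ := hsub hy
      have hy0 : 0 < y := hy.1
      have hφy : 0 < φ y := hφpos y hyIoc
      obtain ⟨hψ0, hψ1⟩ := hψmem y hyIoc
      set P : ℝ := Iplus (φ y) - (A * ψ y + B) with hPdef
      have hAψ : A * ψ y ≤ A := by nlinarith
      have hB : B ≤ |B| := le_abs_self B
      have hP : (1 + C * δ / ρ) / (C * ε) ≤ P := by
        rw [hMdef] at hIM
        rw [hPdef]
        linarith
      have hCδρ : 0 < C * δ / ρ := div_pos (mul_pos hC hδ) hρ
      have hCε : 0 < C * ε := mul_pos hC hε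
      have hP0 : 0 ≤ P := le_trans (div_nonneg (by linarith) hCε.le) hP
      have hψε : ε ≤ 1 - ψ y := by rw [hεdef]; linarith
      have hkey : 1 + C * δ / ρ ≤ C * (1 - ψ y) * P := by
        have h1 : C * ε * ((1 + C * δ / ρ) / (C * ε)) = 1 + C * δ / ρ :=
          mul_div_cancel₀ _ hCε.ne'
        have h2 : C * ε * ((1 + C * δ / ρ) / (C * ε)) ≤ C * ε * P :=
          mul_le_mul_of_nonneg_left hP hCε.le
        have h3 : C * ε * P ≤ C * (1 - ψ y) * P := by
          nlinarith [mul_nonneg (mul_nonneg hC.le hP0) (sub_nonneg.mpr hψε)]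
        calc 1 + C * δ / ρ = C * ε * ((1 + C * δ / ρ) / (C * ε)) := h1.symm
          _ ≤ C * ε * P := h2
          _ ≤ C * (1 - ψ y) * P := h3
      have hDeq : D y = C * (1 - ψ y) * P / y + C * (r + ρ) / (ρ * φ y)
          - (C * δ / ρ) / y := by
        rw [hD, hPdef, hBdef]
        field_simp
        ring
      have hT1 : (1 + C * δ / ρ) / y ≤ C * (1 - ψ y) * P / y := by gcongr
      have hT2 : 0 ≤ C * (r + ρ) / (ρ * φ y) :=
        div_nonneg (mul_nonneg hC.le (by linarith)) (by positivity)
      have hsum : 1 / y + (C * δ / ρ) / y = (1 + C * δ / ρ) / y := by ring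
      rw [hDeq]
      linarith
    -- conclude eventually a < ψ y
    refine Filter.eventually_of_mem (Ioo_mem_nhdsGT_of_mem ⟨le_refl 0, hy₁⟩) ?_
    intro ys hys
    by_contra hcon
    push_neg at hcon
    have hys0 : 0 < ys := hys.1
    have hysIoc : ys ∈ Ioc 0 y₀ := (hsub hys).2
    -- backward invariance: ψ ≤ a on all of (0, ys]
    have hinv : ∀ z ∈ Ioc 0 ys, ψ z ≤ a := by
      by_contra h
      push_neg at h
      obtain ⟨y', hy'mem, hy'ψ⟩ := h
      have hy'lt : y' < ys := lt_of_le_of_ne hy'mem.2 (fun h => by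
        rw [h] at hy'ψ; exact absurd hcon (not_le.mpr hy'ψ))
      set T : Set ℝ := Icc y' ys ∩ ψ ⁻¹' (Iic a) with hTdef
      have hIccsub : Icc y' ys ⊆ Ioc 0 y₀ := fun z hz =>
        ⟨lt_of_lt_of_le hy'mem.1 hz.1, le_trans hz.2 hysIoc.2⟩
      have hcont : ContinuousOn ψ (Icc y' ys) := fun z hz =>
        ((hDode z (hIccsub hz)).continuousAt).continuousWithinAt
      have hTclosed : IsClosed T :=
        hcont.preimage_isClosed_of_isClosed isClosed_Icc isClosed_Iic
      have hTne : T.Nonempty := ⟨ys, ⟨hy'lt.le, le_refl _⟩, hcon⟩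
      have hTbdd : BddBelow T := ⟨y', fun z hz => hz.1.1⟩
      set t := sInf T with htdef
      have htT : t ∈ T := hTclosed.csInf_mem hTne hTbdd
      have hta : ψ t ≤ a := htT.2
      have hy'le : y' ≤ t := le_csInf hTne fun z hz => hz.1.1
      have hty' : y' < t := hy'le.lt_of_ne (fun h => by
        rw [← h] at hta; linarith)
      have ht0 : 0 < t := hy'mem.1.trans hty'
      have htIoo : t ∈ Ioo (0:ℝ) y₁ := ⟨ht0, lt_of_le_of_lt htT.1.2 hys.2⟩
      have hDt : 1 / t ≤ D t := hDge t htIoo hta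
      have hDtpos : 0 < D t := lt_of_lt_of_le (by positivity) hDt
      have hder : HasDerivAt ψ (D t) t := hDode t ((hsub htIoo).2)
      have hslope := hasDerivAt_iff_tendsto_slope.mp hder
      have hev2 : ∀ᶠ z in 𝓝[<] t, 0 < slope ψ t z :=
        (hslope.eventually (eventually_gt_nhds hDtpos)).filter_mono
          (nhdsWithin_mono t fun z hz => ne_of_lt hz)
      have hev3 : ∀ᶠ z in 𝓝[<] t, y' < z :=
        Filter.mem_of_superset (Ioo_mem_nhdsLT_of_mem ⟨hty', le_refl t⟩)
          fun z hz => hz.1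
      have hev4 : ∀ᶠ z in 𝓝[<] t, z ∈ Iio t := eventually_mem_nhdsWithin
      obtain ⟨z, ⟨hz1, hz2⟩, hz3⟩ := ((hev2.and hev3).and hev4).exists
      rw [Set.mem_Iio] at hz3
      -- slope positive and z < t imply ψ z < ψ t ≤ a
      have hzt : z - t ≠ 0 := sub_ne_zero.mpr (ne_of_lt hz3)
      have hmul : slope ψ t z * (z - t) = ψ z - ψ t := by
        rw [slope_def_field]
        field_simp
      have hneg : ψ z - ψ t < 0 := by
        rw [← hmul]
        exact mul_neg_of_pos_of_neg hz1 (by linarith)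
      have hzT : z ∈ T := by
        rw [hTdef]
        exact ⟨⟨hz2.le, hz3.le.trans htT.1.2⟩, by
          simp only [Set.mem_preimage, Set.mem_Iic]; linarith⟩
      exact absurd hzT (notMem_of_lt_csInf hz3 hTbdd)
    -- integrate ψ' ≥ 1/y from ys·e⁻² to ys
    set b : ℝ := ys * Real.exp (-2) with hbdef
    have hb0 : 0 < b := by rw [hbdef]; positivity
    have hexp1 : Real.exp (-2:ℝ) < 1 := Real.exp_lt_one_iff.mpr (by norm_num)
    have hbItv : b < ys := by
      rw [hbdef]
      exact mul_lt_of_lt_one_right hys0 hexp1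
    have hIccsub2 : Icc b ys ⊆ Ioc 0 y₀ := fun z hz =>
      ⟨lt_of_lt_of_le hb0 hz.1, hz.2.trans hysIoc.2⟩
    set g : ℝ → ℝ := fun z => ψ z - Real.log z with hgdef
    have hgder : ∀ z ∈ Icc b ys, HasDerivAt g (D z - z⁻¹) z := fun z hz =>
      (hDode z (hIccsub2 hz)).sub
        (Real.hasDerivAt_log (ne_of_gt (lt_of_lt_of_le hb0 hz.1)))
    have hmono : MonotoneOn g (Icc b ys) := by
      apply monotoneOn_of_deriv_nonneg (convex_Icc b ys)
      · exact fun z hz => (hgder z hz).continuousAt.continuousWithinAt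
      · rw [interior_Icc]
        exact fun z hz =>
          ((hgder z (Ioo_subset_Icc_self hz)).differentiableAt).differentiableWithinAt
      · rw [interior_Icc]
        intro z hz
        rw [(hgder z (Ioo_subset_Icc_self hz)).deriv]
        have hzIoo : z ∈ Ioo (0:ℝ) y₁ :=
          ⟨lt_trans hb0 hz.1, lt_trans hz.2 hys.2⟩
        have h1z := hDge z hzIoo (hinv z ⟨lt_trans hb0 hz.1, hz.2.le⟩)
        rw [one_div] at h1z
        linarith
    have hgb : g b ≤ g ys :=
      hmono ⟨le_refl b, hbItv.le⟩ ⟨hbItv.le, le_refl ys⟩ hbItv.le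
    have hlogb : Real.log b = Real.log ys + (-2) := by
      rw [hbdef, Real.log_mul (ne_of_gt hys0) (Real.exp_ne_zero _), Real.log_exp]
    obtain ⟨hψb0, _⟩ := hψmem b (hIccsub2 ⟨le_refl b, hbItv.le⟩)
    obtain ⟨_, hψys1⟩ := hψmem ys hysIoc
    simp only [hgdef] at hgb
    rw [hlogb] at hgb
    linarith
  · -- easy part: ψ ≤ 1 < a
    intro a ha
    exact hevIoc.mono fun y hy => lt_of_le_of_lt (hψmem y hy).2 ha
end

section
/- Let $y_0>0$, $\rho>0$, and suppose $\varphi:(0,y_0]\to(0,\infty)$ is a $C^1$ increasing function and $\psi:(0,y_0]\to(0,1)$ is continuous, with $\varphi'(y)=\frac{\varphi(y)(1-\psi(y))}{y}$ for all $y\in(0,y_0]$ and $\lim_{y\to0^+}\psi(y)=1$. Then for every $\varepsilon>0$ there exists a constant $B_\varepsilon>0$ such that $\varphi(y)>B_\varepsilon\,y^{\varepsilon}$ for all $y\in(0,y_0]$. -/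
open Filter Set Topology

/-!
Since `ψ → 1` at `0⁺`, the logarithmic derivative `y φ'/φ = 1 - ψ` is below `ε` on some `(0, a]`,
so `φ(y) y^{-ε}` decreases there and `φ(y) ≥ (φ(a)/a^ε) y^ε` on `(0, a]`. On `[a, y₀]` the
monotonicity of `φ` gives `φ(y) ≥ φ(a) ≥ (φ(a)/y₀^ε) y^ε`.
-/

section RpowComparison

variable {f f' : ℝ → ℝ} {a ε : ℝ}

theorem hasDerivAt_mul_rpow_neg {y : ℝ} (hy : 0 < y) (hf : HasDerivAt f (f' y) y) :
    HasDerivAt (fun x => f x * x ^ (-ε)) (y ^ (-ε - 1) * (y * f' y - ε * f y)) y := by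
  refine (hf.mul (Real.hasDerivAt_rpow_const (p := -ε) (Or.inl hy.ne'))).congr_deriv ?_
  rw [Real.rpow_sub hy, Real.rpow_one]
  field_simp
  ring

theorem antitoneOn_mul_rpow_neg (hf : ∀ y ∈ Ioc 0 a, HasDerivAt f (f' y) y)
    (hlt : ∀ y ∈ Ioo 0 a, y * f' y < ε * f y) :
    AntitoneOn (fun y => f y * y ^ (-ε)) (Ioc 0 a) := by
  refine (strictAntiOn_of_deriv_neg (convex_Ioc 0 a) ?_ ?_).antitoneOn
  · intro y hy
    exact (hasDerivAt_mul_rpow_neg hy.1 (hf y hy)).continuousAt.continuousWithinAt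
  · intro y hy
    rw [interior_Ioc] at hy
    rw [(hasDerivAt_mul_rpow_neg hy.1 (hf y (Ioo_subset_Ioc_self hy))).deriv]
    exact mul_neg_of_pos_of_neg (Real.rpow_pos_of_pos hy.1 _) (sub_neg.mpr (hlt y hy))

theorem div_rpow_mul_rpow_le (ha : 0 < a) (hf : ∀ y ∈ Ioc 0 a, HasDerivAt f (f' y) y)
    (hlt : ∀ y ∈ Ioo 0 a, y * f' y < ε * f y) {y : ℝ} (hy : y ∈ Ioc 0 a) :
    f a / a ^ ε * y ^ ε ≤ f y := by
  have hanti := antitoneOn_mul_rpow_neg hf hlt hy (right_mem_Ioc.mpr ha) hy.2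
  have hyε : 0 < y ^ ε := Real.rpow_pos_of_pos hy.1 ε
  simp only [Real.rpow_neg ha.le, Real.rpow_neg hy.1.le, ← div_eq_mul_inv] at hanti
  calc f a / a ^ ε * y ^ ε ≤ f y / y ^ ε * y ^ ε := by gcongr
    _ = f y := div_mul_cancel₀ _ hyε.ne'

theorem div_rpow_mul_rpow_le_of_monotoneOn {b : ℝ} (ha : a ∈ Ioc 0 b) (hε : 0 ≤ ε)
    (hfa : 0 ≤ f a) (hmono : MonotoneOn f (Ioc 0 b))
    (hnear : ∀ y ∈ Ioc 0 a, f a / a ^ ε * y ^ ε ≤ f y) {y : ℝ} (hy : y ∈ Ioc 0 b) :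
    f a / b ^ ε * y ^ ε ≤ f y := by
  have hy0 := hy.1.le
  have ha0 := ha.1
  have hb : 0 < b := ha.1.trans_le ha.2
  rcases le_total y a with hya | hay
  · calc f a / b ^ ε * y ^ ε ≤ f a / a ^ ε * y ^ ε := by gcongr; exact ha.2
      _ ≤ f y := hnear y ⟨hy.1, hya⟩
  · calc f a / b ^ ε * y ^ ε ≤ f a / b ^ ε * b ^ ε :=
        mul_le_mul_of_nonneg_left (Real.rpow_le_rpow hy0 hy.2 hε) (by positivity)
      _ = f a := div_mul_cancel₀ _ (Real.rpow_pos_of_pos hb ε).ne'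
      _ ≤ f y := hmono ha hy hay

end RpowComparison

theorem phi_lower_estimate_general (y₀ : ℝ) (hy₀ : 0 < y₀)
    (φ ψ : ℝ → ℝ)
    (hφpos : ∀ y ∈ Set.Ioc 0 y₀, 0 < φ y)
    (hφmono : StrictMonoOn φ (Set.Ioc 0 y₀))
    (hφode : ∀ y ∈ Set.Ioc 0 y₀, HasDerivAt φ (φ y * (1 - ψ y) / y) y)
    (hψlim : Filter.Tendsto ψ (nhdsWithin 0 (Set.Ioi 0)) (nhds 1)) :
    ∀ ε > (0 : ℝ), ∃ B > (0 : ℝ), ∀ y ∈ Set.Ioc 0 y₀, B * y ^ ε < φ y := by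
  intro ε hε
  obtain ⟨u, hu, hψu⟩ := mem_nhdsGT_iff_exists_Ioo_subset.mp
    (hψlim.eventually (eventually_gt_nhds (by linarith : 1 - ε < 1)))
  set a := min u y₀
  have ha : a ∈ Ioc 0 y₀ := ⟨lt_min hu hy₀, min_le_right u y₀⟩
  have hsub : Ioc 0 a ⊆ Ioc 0 y₀ := Ioc_subset_Ioc_right ha.2
  have hlt : ∀ y ∈ Ioo 0 a, y * (φ y * (1 - ψ y) / y) < ε * φ y := by
    intro y hy
    have hψy : 1 - ε < ψ y := hψu ⟨hy.1, hy.2.trans_le (min_le_left u y₀)⟩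
    rw [mul_div_cancel₀ _ hy.1.ne']
    nlinarith [hφpos y (hsub (Ioo_subset_Ioc_self hy))]
  have hc : 0 < φ a / y₀ ^ ε := div_pos (hφpos a ha) (Real.rpow_pos_of_pos hy₀ ε)
  refine ⟨φ a / y₀ ^ ε / 2, half_pos hc, fun y hy => ?_⟩
  have hyε : 0 < y ^ ε := Real.rpow_pos_of_pos hy.1 ε
  calc φ a / y₀ ^ ε / 2 * y ^ ε < φ a / y₀ ^ ε * y ^ ε := by nlinarith
    _ ≤ φ y := div_rpow_mul_rpow_le_of_monotoneOn ha hε.le (hφpos a ha).le hφmono.monotoneOn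
        (fun z hz => div_rpow_mul_rpow_le ha.1 (fun x hx => hφode x (hsub hx)) hlt hz) hy

/-- if `ψ(y) → 1` as `y → 0⁺`, then for every `ε > 0` there is `B_ε > 0`
with `φ(y) > B_ε y^ε` for all `y ∈ (0, y₀]`. -/
theorem phi_lower_estimate (y₀ ρ : ℝ) (hy₀ : 0 < y₀) (hρ : 0 < ρ)
    (φ ψ : ℝ → ℝ)
    (hφpos : ∀ y ∈ Set.Ioc 0 y₀, 0 < φ y)
    (hφmono : StrictMonoOn φ (Set.Ioc 0 y₀))
    (hψmem : ∀ y ∈ Set.Ioc 0 y₀, 0 < ψ y ∧ ψ y < 1)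
    (hψcont : ContinuousOn ψ (Set.Ioc 0 y₀))
    (hφode : ∀ y ∈ Set.Ioc 0 y₀, HasDerivAt φ (φ y * (1 - ψ y) / y) y)
    (hψlim : Filter.Tendsto ψ (nhdsWithin 0 (Set.Ioi 0)) (nhds 1)) :
    ∀ ε > (0 : ℝ), ∃ B > (0 : ℝ), ∀ y ∈ Set.Ioc 0 y₀, B * y ^ ε < φ y :=
  phi_lower_estimate_general y₀ hy₀ φ ψ hφpos hφmono hφode hψlim
end

section
/- Suppose the gain utility $U_+\in\mathcal{U}$ satisfies the growth condition: there exist $a_1,a_2,a_3>0$ and $a_4\ge0$ such that $U_+(x)\le a_1+x\,U_+'(x)+a_2\,U_+'(x)^{-a_4}$ for all $x>a_3$. Then there exist constants $A_1,A_2>0$ and $A_3\ge0$ such that $G(\phi)\le A_1+A_2\,\phi^{-A_3}$ for all $\phi\in(0,\phi_0]$, where $G(\phi):=U_+\big((U_+')^{-1}(\phi)\big)-\phi\big(\alpha+(U_+')^{-1}(\phi)\big)$. -/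
open Filter Set Topology

/-- The value `f'(0)` as the right-limit at `0`, as an extended real. -/
noncomputable def derivAtZero (f' : ℝ → ℝ) : EReal :=
  Filter.limsup (fun x => ((f' x : ℝ) : EReal)) (nhdsWithin 0 (Set.Ioi 0))

/-- under the growth condition on `U₊`, the dual function `G` satisfies
`G(φ) ≤ A₁ + A₂ φ^{-A₃}` on `(0, φ₀]` for some constants `A₁, A₂ > 0` and `A₃ ≥ 0`. -/
theorem G_growth_estimate (α : ℝ) (hα0 : 0 < α) (hα1 : α ≤ 1)
    (Up Up' Up'' Um Um' Um'' : ℝ → ℝ)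
    (hUp : UtilityClass Up Up' Up'') (hUm : UtilityClass Um Um' Um'')
    (hA : ((Um α : ℝ) : EReal) ≤ ((α : ℝ) : EReal) * derivAtZero Up')
    (c₀ φ₀ : ℝ) (hc₀α : α ≤ c₀)
    (hc₀ : c₀ * Up' (c₀ - α) - Up (c₀ - α) = Um α)
    (hφ₀ : φ₀ = Up' (c₀ - α))
    (Iplus : ℝ → ℝ) (hI : Set.InvOn Iplus Up' (Set.Ioi 0) (Up' '' Set.Ioi 0))
    (G : ℝ → ℝ) (hG : ∀ z, G z = Up (Iplus z) - z * (α + Iplus z))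
    -- the growth condition on `U₊`
    (a1 a2 a3 a4 : ℝ) (ha1 : 0 < a1) (ha2 : 0 < a2) (ha3 : 0 < a3) (ha4 : 0 ≤ a4)
    (hgrow : ∀ x, a3 < x → Up x ≤ a1 + x * Up' x + a2 * Up' x ^ (-a4)) :
    ∃ A1 A2 A3 : ℝ, 0 < A1 ∧ 0 < A2 ∧ 0 ≤ A3 ∧
      ∀ z, 0 < z → z ≤ φ₀ → G z ≤ A1 + A2 * z ^ (-A3) := by
  have hcont' : ContinuousOn Up' (Set.Ioi 0) := fun x hx =>
    ((hUp.hasDeriv2 x hx).continuousAt).continuousWithinAt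
  have hmono : StrictMonoOn Up (Set.Ioi 0) := by
    apply strictMonoOn_of_deriv_pos (convex_Ioi 0)
    · exact fun x hx => ((hUp.hasDeriv x hx).continuousAt).continuousWithinAt
    · intro x hx
      rw [interior_Ioi] at hx
      rw [(hUp.hasDeriv x hx).deriv]
      exact hUp.deriv_pos x hx
  refine ⟨max a1 (Up a3) + |G φ₀| + 1, a2, a4, ?_, ha2, ha4, ?_⟩
  · have h1 : (0:ℝ) < max a1 (Up a3) := lt_of_lt_of_le ha1 (le_max_left _ _)
    have h2 : (0:ℝ) ≤ |G φ₀| := abs_nonneg _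
    linarith
  intro z hz hzφ
  have hzpow : 0 < a2 * z ^ (-a4) := mul_pos ha2 (Real.rpow_pos_of_pos hz _)
  rcases eq_or_lt_of_le hzφ with heq | hlt
  · rw [heq] at hzpow ⊢
    have : G φ₀ ≤ |G φ₀| := le_abs_self _
    nlinarith [lt_of_lt_of_le ha1 (le_max_left a1 (Up a3))]
  · -- z < φ₀ : find x₁ > 0 with z < Up' x₁
    obtain ⟨x₁, hx₁pos, hx₁⟩ : ∃ x₁ > 0, z < Up' x₁ := by
      rcases lt_or_eq_of_le hc₀α with hlt' | heq'
      · refine ⟨c₀ - α, by linarith, ?_⟩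
        rw [hφ₀] at hlt; exact hlt
      · -- c₀ = α
        have hzero : c₀ - α = 0 := by rw [← heq']; ring
        have hUmα : Um α = α * φ₀ := by
          rw [hφ₀, ← hc₀, hzero, hUp.map_zero, ← heq']; ring
        have hL : (z : EReal) < derivAtZero Up' := by
          rw [hUmα] at hA
          have tri : derivAtZero Up' = ⊥ ∨ derivAtZero Up' = ⊤ ∨
              ∃ l : ℝ, derivAtZero Up' = (l : EReal) := by
            induction derivAtZero Up' using EReal.rec with
            | bot => exact Or.inl rfl
            | coe l => exact Or.inr (Or.inr ⟨l, rfl⟩)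
            | top => exact Or.inr (Or.inl rfl)
          rcases tri with hb | ht | ⟨l, hl⟩
          · rw [hb, EReal.coe_mul_bot_of_pos hα0] at hA
            exact absurd (le_bot_iff.1 hA) (EReal.coe_ne_bot _)
          · rw [ht]; exact EReal.coe_lt_top z
          · rw [hl, ← EReal.coe_mul, EReal.coe_le_coe_iff] at hA
            have hφl : φ₀ ≤ l := le_of_mul_le_mul_left hA hα0
            rw [hl]
            exact EReal.coe_lt_coe_iff.2 (lt_of_lt_of_le hlt hφl)
        have hfreq : ∃ᶠ x in nhdsWithin (0:ℝ) (Set.Ioi 0),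
            (z : EReal) < ((Up' x : ℝ) : EReal) :=
          Filter.frequently_lt_of_lt_limsup (by isBoundedDefault) hL
        obtain ⟨x, hxmem, hxlt⟩ :=
          (hfreq.and_eventually (eventually_mem_nhdsWithin)).exists
        exact ⟨x, hxlt, EReal.coe_lt_coe_iff.1 hxmem⟩
    -- find x₂ ≥ x₁ with Up' x₂ < z
    obtain ⟨x₂, hx₂ge, hx₂⟩ : ∃ x₂, x₁ ≤ x₂ ∧ Up' x₂ < z := by
      have := (hUp.tendsto_deriv.eventually_lt_const hz).and (eventually_ge_atTop x₁)
      obtain ⟨x₂, h1, h2⟩ := this.exists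
      exact ⟨x₂, h2, h1⟩
    -- IVT
    obtain ⟨x, hxmem, hxeq⟩ : ∃ x ∈ Set.Icc x₁ x₂, Up' x = z := by
      have hsub : Set.Icc x₁ x₂ ⊆ Set.Ioi 0 := fun y hy => lt_of_lt_of_le hx₁pos hy.1
      have := intermediate_value_Icc' hx₂ge (hcont'.mono hsub)
      have hzmem : z ∈ Set.Icc (Up' x₂) (Up' x₁) := ⟨hx₂.le, hx₁.le⟩
      obtain ⟨x, hx, hxe⟩ := this hzmem
      exact ⟨x, hx, hxe⟩
    have hxpos : 0 < x := lt_of_lt_of_le hx₁pos hxmem.1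
    have hIx : Iplus z = x := by rw [← hxeq]; exact hI.1 hxpos
    rw [hG, hIx]
    rcases le_or_gt x a3 with hxa3 | hxa3
    · -- small x: Up x ≤ Up a3
      have hUple : Up x ≤ Up a3 := by
        rcases eq_or_lt_of_le hxa3 with h | h
        · rw [h]
        · exact (hmono hxpos ha3 h).le
      have h1 : Up a3 ≤ max a1 (Up a3) := le_max_right _ _
      have h2 : 0 ≤ |G φ₀| := abs_nonneg _
      have h3 : 0 < z * (α + x) := mul_pos hz (by linarith)
      linarith
    · -- large x: growth condition
      have := hgrow x hxa3
      rw [hxeq] at this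
      have h1 : a1 ≤ max a1 (Up a3) := le_max_left _ _
      have h2 : 0 ≤ |G φ₀| := abs_nonneg _
      have h3 : 0 < z * α := mul_pos hz hα0
      nlinarith
end
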